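/- Fix a probability measure γ on [0,1]^2 and a fixed finite sequence of valuations. There exists a probability measure γ_G supported on the finite grid G = {s^0,...,s^{T+1}} × {b^0,...,b^{T+1}} (where the s^i sort {0,1,s_1,...,s_T} and the b^j sort {0,1,b_1,...,b_T}) such that (i) E_{γ_G}[Σ_t GFT_t(p,q)] = E_γ[Σ_t GFT_t(p,q)], (ii) E_{γ_G}[Σ_t REV_t(p,q)] ≥ E_γ[Σ_t REV_t(p,q)], obtained via the pushforward of γ under the map sending (p,q) to (largest s^i ≤ p, smallest b^j ≥ q). -/
import Mathlib

open Finset MeasureTheory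

noncomputable def gft (s b p q : ℝ) : ℝ :=
  (if s ≤ p then (1:ℝ) else 0) * (if q ≤ b then (1:ℝ) else 0) * (b - s)

noncomputable def rev (s b p q : ℝ) : ℝ :=
  (if s ≤ p then (1:ℝ) else 0) * (if q ≤ b then (1:ℝ) else 0) * (q - p)

noncomputable def roundDown (S : Finset ℝ) (p : ℝ) : ℝ :=
  if h : (S.filter (· ≤ p)).Nonempty then (S.filter (· ≤ p)).max' h else 0

noncomputable def roundUp (B : Finset ℝ) (q : ℝ) : ℝ :=
  if h : (B.filter (q ≤ ·)).Nonempty then (B.filter (q ≤ ·)).min' h else 1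

lemma roundDown_mono (S : Finset ℝ) (hS : ∀ x ∈ S, (0:ℝ) ≤ x) :
    Monotone (roundDown S) := by
  intro p p' hpp'
  have hsub : S.filter (· ≤ p) ⊆ S.filter (· ≤ p') := by
    intro x hx
    rw [Finset.mem_filter] at hx ⊢
    exact ⟨hx.1, hx.2.trans hpp'⟩
  unfold roundDown
  split_ifs with h1 h2 h2
  · apply Finset.max'_le
    intro x hx
    exact Finset.le_max' _ x (hsub hx)
  · exact absurd (h1.mono hsub) h2
  · have := Finset.max'_mem _ h2
    rw [Finset.mem_filter] at this
    exact hS _ this.1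
  · exact le_rfl

lemma roundUp_mono (B : Finset ℝ) (hB : ∀ x ∈ B, x ≤ (1:ℝ)) :
    Monotone (roundUp B) := by
  intro q q' hqq'
  have hsub : B.filter (q' ≤ ·) ⊆ B.filter (q ≤ ·) := by
    intro x hx
    rw [Finset.mem_filter] at hx ⊢
    exact ⟨hx.1, hqq'.trans hx.2⟩
  unfold roundUp
  split_ifs with h1 h2 h2
  · apply Finset.le_min'
    intro x hx
    exact Finset.min'_le _ x (hsub hx)
  · have := Finset.min'_mem _ h1
    rw [Finset.mem_filter] at this
    exact hB _ this.1
  · exact absurd (h2.mono hsub) h1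
  · exact le_rfl

lemma roundDown_spec (S : Finset ℝ) (h0 : (0:ℝ) ∈ S) (p : ℝ) (hp : 0 ≤ p) :
    roundDown S p ∈ S ∧ roundDown S p ≤ p ∧ ∀ x ∈ S, x ≤ p → x ≤ roundDown S p := by
  have hne : (S.filter (· ≤ p)).Nonempty := ⟨0, Finset.mem_filter.mpr ⟨h0, hp⟩⟩
  rw [roundDown, dif_pos hne]
  have hmem := Finset.max'_mem _ hne
  rw [Finset.mem_filter] at hmem
  exact ⟨hmem.1, hmem.2, fun x hx hxp => Finset.le_max' (S.filter (· ≤ p)) x (Finset.mem_filter.mpr ⟨hx, hxp⟩)⟩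

lemma roundUp_spec (B : Finset ℝ) (h1 : (1:ℝ) ∈ B) (q : ℝ) (hq : q ≤ 1) :
    roundUp B q ∈ B ∧ q ≤ roundUp B q ∧ ∀ x ∈ B, q ≤ x → roundUp B q ≤ x := by
  have hne : (B.filter (q ≤ ·)).Nonempty := ⟨1, Finset.mem_filter.mpr ⟨h1, hq⟩⟩
  rw [roundUp, dif_pos hne]
  have hmem := Finset.min'_mem _ hne
  rw [Finset.mem_filter] at hmem
  exact ⟨hmem.1, hmem.2, fun x hx hxq => Finset.min'_le (B.filter (q ≤ ·)) x (Finset.mem_filter.mpr ⟨hx, hxq⟩)⟩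

lemma gft_round (s b p q p' q' : ℝ) (hsp : s ≤ p' ↔ s ≤ p) (hqb : q' ≤ b ↔ q ≤ b) :
    gft s b p' q' = gft s b p q := by
  by_cases h1 : s ≤ p <;> by_cases h2 : q ≤ b <;>
    simp [gft, h1, h2, hsp, hqb]

lemma rev_round (s b p q p' q' : ℝ) (hsp : s ≤ p' ↔ s ≤ p) (hqb : q' ≤ b ↔ q ≤ b)
    (hp' : p' ≤ p) (hq' : q ≤ q') :
    rev s b p q ≤ rev s b p' q' := by
  by_cases h1 : s ≤ p <;> by_cases h2 : q ≤ b <;>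
    simp [rev, h1, h2, hsp, hqb]
  linarith

lemma abs_gft_le (s b p q : ℝ) (hs : s ∈ Set.Icc (0:ℝ) 1) (hb : b ∈ Set.Icc (0:ℝ) 1) :
    |gft s b p q| ≤ 1 := by
  obtain ⟨hs0, hs1⟩ := hs; obtain ⟨hb0, hb1⟩ := hb
  by_cases h1 : s ≤ p <;> by_cases h2 : q ≤ b <;>
    simp [gft, h1, h2, abs_le] <;> constructor <;> linarith

lemma abs_rev_le (s b p q : ℝ) (hp : p ∈ Set.Icc (0:ℝ) 1) (hq : q ∈ Set.Icc (0:ℝ) 1) :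
    |rev s b p q| ≤ 1 := by
  obtain ⟨hp0, hp1⟩ := hp; obtain ⟨hq0, hq1⟩ := hq
  by_cases h1 : s ≤ p <;> by_cases h2 : q ≤ b <;>
    simp [rev, h1, h2, abs_le] <;> constructor <;> linarith

/-- Any distribution over price pairs can be rounded to one supported on the
finite grid induced by the valuations (plus `{0,1}`), preserving the expected
gain from trade and weakly increasing the expected revenue. -/
theorem stmt_17 (T : ℕ) (s b : ℕ → ℝ)
    (hvals : ∀ t, s t ∈ Set.Icc (0:ℝ) 1 ∧ b t ∈ Set.Icc (0:ℝ) 1)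
    (γ : Measure (ℝ × ℝ)) [IsProbabilityMeasure γ]
    (hsupp : γ {pq : ℝ × ℝ | ¬ (pq.1 ∈ Set.Icc (0:ℝ) 1 ∧ pq.2 ∈ Set.Icc (0:ℝ) 1)} = 0) :
    ∃ γG : Measure (ℝ × ℝ), IsProbabilityMeasure γG ∧
      γG ((({0, 1} ∪ s '' {t | t < T}) ×ˢ ({0, 1} ∪ b '' {t | t < T}) : Set (ℝ × ℝ))ᶜ) = 0 ∧
      (∫ pq, (∑ t ∈ range T, gft (s t) (b t) pq.1 pq.2) ∂γG
        = ∫ pq, (∑ t ∈ range T, gft (s t) (b t) pq.1 pq.2) ∂γ) ∧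
      (∫ pq, (∑ t ∈ range T, rev (s t) (b t) pq.1 pq.2) ∂γ
        ≤ ∫ pq, (∑ t ∈ range T, rev (s t) (b t) pq.1 pq.2) ∂γG) := by
  classical
  set S : Finset ℝ := insert 0 (insert 1 ((range T).image s)) with hS
  set B : Finset ℝ := insert 0 (insert 1 ((range T).image b)) with hB
  have hScoe : (S : Set ℝ) = ({0, 1} ∪ s '' {t | t < T}) := by
    simp [hS, Set.image, Set.ext_iff]
    intro x; constructor
    · rintro (h | h | ⟨t, ht, rfl⟩)
      · exact Or.inl (Or.inl h)
      · exact Or.inl (Or.inr h)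
      · exact Or.inr ⟨t, ht, rfl⟩
    · rintro ((h | h) | ⟨t, ht, rfl⟩)
      · exact Or.inl h
      · exact Or.inr (Or.inl h)
      · exact Or.inr (Or.inr ⟨t, ht, rfl⟩)
  have hBcoe : (B : Set ℝ) = ({0, 1} ∪ b '' {t | t < T}) := by
    simp [hB, Set.image, Set.ext_iff]
    intro x; constructor
    · rintro (h | h | ⟨t, ht, rfl⟩)
      · exact Or.inl (Or.inl h)
      · exact Or.inl (Or.inr h)
      · exact Or.inr ⟨t, ht, rfl⟩
    · rintro ((h | h) | ⟨t, ht, rfl⟩)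
      · exact Or.inl h
      · exact Or.inr (Or.inl h)
      · exact Or.inr (Or.inr ⟨t, ht, rfl⟩)
  have hSsub : ∀ x ∈ S, x ∈ Set.Icc (0:ℝ) 1 := by
    intro x hx
    simp [hS] at hx
    rcases hx with rfl | rfl | ⟨t, _, rfl⟩
    · exact ⟨le_refl 0, zero_le_one⟩
    · exact ⟨zero_le_one, le_refl 1⟩
    · exact (hvals t).1
  have hBsub : ∀ x ∈ B, x ∈ Set.Icc (0:ℝ) 1 := by
    intro x hx
    simp [hB] at hx
    rcases hx with rfl | rfl | ⟨t, _, rfl⟩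
    · exact ⟨le_refl 0, zero_le_one⟩
    · exact ⟨zero_le_one, le_refl 1⟩
    · exact (hvals t).2
  have hS0 : (0:ℝ) ∈ S := by simp [hS]
  have hB1 : (1:ℝ) ∈ B := by simp [hB]
  set f : ℝ × ℝ → ℝ × ℝ := fun pq => (roundDown S pq.1, roundUp B pq.2) with hf
  have hfm : Measurable f := by
    exact ((roundDown_mono S (fun x hx => (hSsub x hx).1)).measurable.comp measurable_fst).prodMk
      ((roundUp_mono B (fun x hx => (hBsub x hx).2)).measurable.comp measurable_snd)
  -- a.e. membership in the good set
  have hE : ∀ᵐ pq ∂γ, pq.1 ∈ Set.Icc (0:ℝ) 1 ∧ pq.2 ∈ Set.Icc (0:ℝ) 1 := ae_iff.mpr hsupp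
  -- measurability of the integrands
  have hInd1 : ∀ c : ℝ, Measurable (fun pq : ℝ × ℝ => if c ≤ pq.1 then (1:ℝ) else 0) :=
    fun c => Measurable.ite (measurableSet_le measurable_const measurable_fst)
      measurable_const measurable_const
  have hInd2 : ∀ c : ℝ, Measurable (fun pq : ℝ × ℝ => if pq.2 ≤ c then (1:ℝ) else 0) :=
    fun c => Measurable.ite (measurableSet_le measurable_snd measurable_const)
      measurable_const measurable_const
  have hGm : Measurable (fun pq : ℝ × ℝ => ∑ t ∈ range T, gft (s t) (b t) pq.1 pq.2) := by
    apply Finset.measurable_sum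
    intro t _
    unfold gft
    exact (((hInd1 (s t)).mul (hInd2 (b t))).mul measurable_const)
  have hRm : Measurable (fun pq : ℝ × ℝ => ∑ t ∈ range T, rev (s t) (b t) pq.1 pq.2) := by
    apply Finset.measurable_sum
    intro t _
    unfold rev
    exact (((hInd1 (s t)).mul (hInd2 (b t))).mul (measurable_snd.sub measurable_fst))
  have hsmem : ∀ t ∈ range T, s t ∈ S := by
    intro t ht
    simp only [hS, Finset.mem_insert]
    exact Or.inr (Or.inr (Finset.mem_image.mpr ⟨t, ht, rfl⟩))
  have hbmem : ∀ t ∈ range T, b t ∈ B := by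
    intro t ht
    simp only [hB, Finset.mem_insert]
    exact Or.inr (Or.inr (Finset.mem_image.mpr ⟨t, ht, rfl⟩))
  -- pointwise facts on the good set
  have key : ∀ pq : ℝ × ℝ, pq.1 ∈ Set.Icc (0:ℝ) 1 → pq.2 ∈ Set.Icc (0:ℝ) 1 →
      (f pq).1 ∈ S ∧ (f pq).2 ∈ B ∧ (f pq).1 ≤ pq.1 ∧ pq.2 ≤ (f pq).2 ∧
      (∀ t ∈ range T, (s t ≤ (f pq).1 ↔ s t ≤ pq.1) ∧ ((f pq).2 ≤ b t ↔ pq.2 ≤ b t)) := by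
    intro pq hp hq
    obtain ⟨hDS, hDle, hDmax⟩ := roundDown_spec S hS0 pq.1 hp.1
    obtain ⟨hUB, hUle, hUmin⟩ := roundUp_spec B hB1 pq.2 hq.2
    refine ⟨hDS, hUB, hDle, hUle, fun t ht => ⟨⟨fun h => h.trans hDle,
      fun h => hDmax _ (hsmem t ht) h⟩, ⟨fun h => hUle.trans h,
      fun h => hUmin _ (hbmem t ht) h⟩⟩⟩
  have hgft_ae : (fun pq => ∑ t ∈ range T, gft (s t) (b t) (f pq).1 (f pq).2)
      =ᵐ[γ] (fun pq => ∑ t ∈ range T, gft (s t) (b t) pq.1 pq.2) := by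
    filter_upwards [hE] with pq hpq
    obtain ⟨_, _, _, _, hiff⟩ := key pq hpq.1 hpq.2
    exact Finset.sum_congr rfl fun t ht =>
      gft_round (s t) (b t) pq.1 pq.2 _ _ (hiff t ht).1 (hiff t ht).2
  have hrev_ae : ∀ᵐ pq ∂γ, (∑ t ∈ range T, rev (s t) (b t) pq.1 pq.2)
      ≤ ∑ t ∈ range T, rev (s t) (b t) (f pq).1 (f pq).2 := by
    filter_upwards [hE] with pq hpq
    obtain ⟨_, _, hle1, hle2, hiff⟩ := key pq hpq.1 hpq.2
    exact Finset.sum_le_sum fun t ht =>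
      rev_round (s t) (b t) pq.1 pq.2 _ _ (hiff t ht).1 (hiff t ht).2 hle1 hle2
  -- integrability
  have sum_bound : ∀ (g : ℕ → ℝ), (∀ t ∈ range T, |g t| ≤ 1) →
      ‖∑ t ∈ range T, g t‖ ≤ (T:ℝ) := by
    intro g hg
    calc ‖∑ t ∈ range T, g t‖ ≤ ∑ t ∈ range T, ‖g t‖ := norm_sum_le _ _
    _ ≤ ∑ _t ∈ range T, (1:ℝ) := Finset.sum_le_sum fun t ht => hg t ht
    _ = (T:ℝ) := by simp
  have hRint : Integrable (fun pq : ℝ × ℝ => ∑ t ∈ range T, rev (s t) (b t) pq.1 pq.2) γ := by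
    refine Integrable.mono' (integrable_const (T:ℝ)) hRm.aestronglyMeasurable ?_
    filter_upwards [hE] with pq hpq
    exact sum_bound _ fun t ht => abs_rev_le _ _ _ _ hpq.1 hpq.2
  have hRfint : Integrable (fun pq : ℝ × ℝ =>
      ∑ t ∈ range T, rev (s t) (b t) (f pq).1 (f pq).2) γ := by
    refine Integrable.mono' (integrable_const (T:ℝ)) ((hRm.comp hfm).aestronglyMeasurable) ?_
    filter_upwards [hE] with pq hpq
    obtain ⟨h1, h2, _, _, _⟩ := key pq hpq.1 hpq.2
    exact sum_bound _ fun t ht => abs_rev_le _ _ _ _ (hSsub _ h1) (hBsub _ h2)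
  refine ⟨γ.map f, Measure.isProbabilityMeasure_map hfm.aemeasurable, ?_, ?_, ?_⟩
  · rw [← hScoe, ← hBcoe,
      Measure.map_apply hfm ((S.finite_toSet.prod B.finite_toSet).measurableSet.compl)]
    refine measure_mono_null ?_ hsupp
    intro pq hpq
    simp only [Set.mem_preimage, Set.mem_compl_iff, Set.mem_prod] at hpq
    intro hgood
    obtain ⟨h1, h2, _, _, _⟩ := key pq hgood.1 hgood.2
    exact hpq ⟨h1, h2⟩
  · rw [integral_map hfm.aemeasurable hGm.aestronglyMeasurable]
    exact integral_congr_ae hgft_ae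
  · rw [integral_map hfm.aemeasurable hRm.aestronglyMeasurable]
    exact integral_mono_ae hRint hRfint hrev_ae
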